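/- arXiv:2112.04290 — 2 statements merged into one kernel-verified Lean document; each statement's English description precedes it below -/
import Mathlib

section
/- With $d$ the pseudo-metric on graded linear subspaces defined by $d(W,W') = \limsup_{k\to\infty} k^{-n}(2\dim(W_k + W'_k) - \dim W_k - \dim W'_k)$, for any three graded linear subspaces $W, W', W''$ one has $d(W + W'', W' + W'') \leq d(W, W')$, where $(W + W'')_k := W_k + W''_k$. -/
open Filter

/-- The pseudo-distance between two graded linear subspaces:
`d(W,W') = limsup_k k⁻ⁿ (2 dim(W_k + W'_k) - dim W_k - dim W'_k)`. -/
noncomputable def gradedDist {𝕜 : Type*} [Field 𝕜] {V : ℕ → Type*}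
    [∀ k, AddCommGroup (V k)] [∀ k, Module 𝕜 (V k)] [∀ k, FiniteDimensional 𝕜 (V k)]
    (n : ℕ) (W W' : ∀ k, Submodule 𝕜 (V k)) : ℝ :=
  limsup (fun k : ℕ =>
    (2 * (Module.finrank 𝕜 (W k ⊔ W' k : Submodule 𝕜 (V k)) : ℝ)
      - Module.finrank 𝕜 (W k) - Module.finrank 𝕜 (W' k)) / (k : ℝ) ^ n) atTop

lemma aux_sub {𝕜 M : Type*} [Field 𝕜] [AddCommGroup M] [Module 𝕜 M]
    [FiniteDimensional 𝕜 M] (A B C : Submodule 𝕜 M) :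
    (Module.finrank 𝕜 ((A ⊔ C) ⊔ B : Submodule 𝕜 M) : ℝ)
      - Module.finrank 𝕜 (A ⊔ C : Submodule 𝕜 M)
    ≤ (Module.finrank 𝕜 (A ⊔ B : Submodule 𝕜 M) : ℝ) - Module.finrank 𝕜 A := by
  have h1 := Submodule.finrank_sup_add_finrank_inf_eq A B
  have h2 := Submodule.finrank_sup_add_finrank_inf_eq (A ⊔ C) B
  have h3 : Module.finrank 𝕜 (A ⊓ B : Submodule 𝕜 M)
      ≤ Module.finrank 𝕜 ((A ⊔ C) ⊓ B : Submodule 𝕜 M) :=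
    Submodule.finrank_mono (inf_le_inf_right B le_sup_left)
  have h1' : ((Module.finrank 𝕜 (A ⊔ B : Submodule 𝕜 M) : ℝ)
      + Module.finrank 𝕜 (A ⊓ B : Submodule 𝕜 M))
      = (Module.finrank 𝕜 A : ℝ) + Module.finrank 𝕜 B := by exact_mod_cast h1
  have h2' : ((Module.finrank 𝕜 ((A ⊔ C) ⊔ B : Submodule 𝕜 M) : ℝ)
      + Module.finrank 𝕜 ((A ⊔ C) ⊓ B : Submodule 𝕜 M))
      = (Module.finrank 𝕜 (A ⊔ C : Submodule 𝕜 M) : ℝ) + Module.finrank 𝕜 B := by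
    exact_mod_cast h2
  have h3' : (Module.finrank 𝕜 (A ⊓ B : Submodule 𝕜 M) : ℝ)
      ≤ Module.finrank 𝕜 ((A ⊔ C) ⊓ B : Submodule 𝕜 M) := by exact_mod_cast h3
  linarith

theorem stmt5 {𝕜 : Type*} [Field 𝕜] {V : ℕ → Type*}
    [∀ k, AddCommGroup (V k)] [∀ k, Module 𝕜 (V k)] [∀ k, FiniteDimensional 𝕜 (V k)]
    (n : ℕ) (hn : 1 ≤ n)
    (hbdd : ∃ C : ℝ, ∀ k : ℕ, 1 ≤ k → (Module.finrank 𝕜 (V k) : ℝ) ≤ C * (k : ℝ) ^ n)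
    (W W' W'' : ∀ k, Submodule 𝕜 (V k)) :
    gradedDist n (fun k => W k ⊔ W'' k) (fun k => W' k ⊔ W'' k) ≤ gradedDist n W W' := by
  obtain ⟨C, hC⟩ := hbdd
  apply limsup_le_limsup
  · -- pointwise eventual inequality
    filter_upwards [eventually_ge_atTop 1] with k hk
    have hkpos : (0:ℝ) < (k:ℝ) ^ n := by positivity
    apply div_le_div_of_nonneg_right ?_ hkpos.le |>.trans_eq rfl
    -- numerator inequality
    have e1 : ((W k ⊔ W'' k) ⊔ (W' k ⊔ W'' k) : Submodule 𝕜 (V k))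
        = (W k ⊔ W'' k) ⊔ W' k := by
      rw [sup_assoc, sup_comm (W' k) (W'' k), ← sup_assoc (W'' k), sup_idem, ← sup_assoc]
    have h1 : (Module.finrank 𝕜 ((W k ⊔ W'' k) ⊔ (W' k ⊔ W'' k) : Submodule 𝕜 (V k)) : ℝ)
        - Module.finrank 𝕜 (W k ⊔ W'' k : Submodule 𝕜 (V k))
        ≤ (Module.finrank 𝕜 (W k ⊔ W' k : Submodule 𝕜 (V k)) : ℝ)
          - Module.finrank 𝕜 (W k) := by
      rw [e1]; exact aux_sub (W k) (W' k) (W'' k)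
    have e2 : ((W k ⊔ W'' k) ⊔ (W' k ⊔ W'' k) : Submodule 𝕜 (V k))
        = (W' k ⊔ W'' k) ⊔ W k := by
      rw [sup_comm (W k ⊔ W'' k), sup_assoc, sup_comm (W k) (W'' k),
        ← sup_assoc (W'' k), sup_idem, ← sup_assoc]
    have h2 : (Module.finrank 𝕜 ((W k ⊔ W'' k) ⊔ (W' k ⊔ W'' k) : Submodule 𝕜 (V k)) : ℝ)
        - Module.finrank 𝕜 (W' k ⊔ W'' k : Submodule 𝕜 (V k))
        ≤ (Module.finrank 𝕜 (W' k ⊔ W k : Submodule 𝕜 (V k)) : ℝ)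
          - Module.finrank 𝕜 (W' k) := by
      rw [e2]; exact aux_sub (W' k) (W k) (W'' k)
    rw [sup_comm (W' k) (W k)] at h2
    linarith
  · -- cobounded below by 0
    apply isCoboundedUnder_le_of_eventually_le (x := 0) atTop
    apply Eventually.of_forall
    intro k
    apply div_nonneg ?_ (by positivity)
    have hA : Module.finrank 𝕜 ((W k ⊔ W'' k) : Submodule 𝕜 (V k))
        ≤ Module.finrank 𝕜 ((W k ⊔ W'' k) ⊔ (W' k ⊔ W'' k) : Submodule 𝕜 (V k)) :=
      Submodule.finrank_mono le_sup_left
    have hB : Module.finrank 𝕜 ((W' k ⊔ W'' k) : Submodule 𝕜 (V k))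
        ≤ Module.finrank 𝕜 ((W k ⊔ W'' k) ⊔ (W' k ⊔ W'' k) : Submodule 𝕜 (V k)) :=
      Submodule.finrank_mono le_sup_right
    have hA' : (Module.finrank 𝕜 ((W k ⊔ W'' k) : Submodule 𝕜 (V k)) : ℝ)
        ≤ Module.finrank 𝕜 ((W k ⊔ W'' k) ⊔ (W' k ⊔ W'' k) : Submodule 𝕜 (V k)) := by
      exact_mod_cast hA
    have hB' : (Module.finrank 𝕜 ((W' k ⊔ W'' k) : Submodule 𝕜 (V k)) : ℝ)
        ≤ Module.finrank 𝕜 ((W k ⊔ W'' k) ⊔ (W' k ⊔ W'' k) : Submodule 𝕜 (V k)) := by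
      exact_mod_cast hB
    linarith
  · -- bounded above
    refine ⟨2 * C, ?_⟩
    rw [eventually_map]
    filter_upwards [eventually_ge_atTop 1] with k hk
    have hkpos : (0:ℝ) < (k:ℝ) ^ n := by positivity
    rw [div_le_iff₀ hkpos]
    have hd : (Module.finrank 𝕜 (W k ⊔ W' k : Submodule 𝕜 (V k)) : ℝ)
        ≤ Module.finrank 𝕜 (V k) := by
      exact_mod_cast (W k ⊔ W' k).finrank_le
    have := hC k hk
    have h0 : (0:ℝ) ≤ Module.finrank 𝕜 (W k) := by positivity
    have h0' : (0:ℝ) ≤ Module.finrank 𝕜 (W' k) := by positivity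
    nlinarith
end

section
/- Let $d$ be the pseudo-metric on graded linear subspaces as above, and suppose $W^i \to W$ and $V^i \to V$ in the pseudo-metric $d$ (i.e., $d(W^i, W) \to 0$ and $d(V^i, V) \to 0$). Then $W^i \cap V^i \to W \cap V$ and $W^i + V^i \to W + V$. -/
open Filter

/-!
In the lattice of subspaces of a finite-dimensional space, `dim` is a monotone modular
valuation, and `2 dim (A ⊔ B) - dim A - dim B = dim (A ⊔ B) - dim (A ⊓ B)` is the associated
lattice distance. For such distances sup and inf are jointly `1`-Lipschitz:
`δ(a ⊔ c, b ⊔ e) ≤ δ(a, b) + δ(c, e)`, and likewise for `⊓`. Dividing by `kⁿ` and passing to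
the limsup (the ratios are bounded because `dim V_k = O(kⁿ)`) gives the same inequalities for
`gradedDist`, and the theorem follows by squeezing.
-/

open Module

section ModularValuation

variable {L : Type*} [Lattice L]

def latticeDist (v : L → ℝ) (a b : L) : ℝ := v (a ⊔ b) - v (a ⊓ b)

variable {v : L → ℝ}

lemma latticeDist_nonneg (hmono : Monotone v) (a b : L) : 0 ≤ latticeDist v a b :=
  sub_nonneg.2 (hmono inf_le_sup)

lemma two_mul_sup_sub_sub_eq_latticeDist (hmod : ∀ a b, v (a ⊔ b) + v (a ⊓ b) = v a + v b)
    (a b : L) : 2 * v (a ⊔ b) - v a - v b = latticeDist v a b := by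
  unfold latticeDist; linarith [hmod a b]

variable (hmono : Monotone v) (hmod : ∀ a b, v (a ⊔ b) + v (a ⊓ b) = v a + v b)
include hmono hmod

lemma sup_sub_sup_le_of_le {x x' y y' : L} (hx : x' ≤ x) (hy : y' ≤ y) :
    v (x ⊔ y) - v (x' ⊔ y') ≤ (v x - v x') + (v y - v y') := by
  linarith [hmod x y, hmod x' y', hmono (inf_le_inf hx hy)]

lemma inf_sub_inf_le_of_le {x x' y y' : L} (hx : x' ≤ x) (hy : y' ≤ y) :
    v (x ⊓ y) - v (x' ⊓ y') ≤ (v x - v x') + (v y - v y') := by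
  linarith [hmod x y, hmod x' y', hmono (sup_le_sup hx hy)]

lemma latticeDist_sup_sup_le (a b c e : L) :
    latticeDist v (a ⊔ c) (b ⊔ e) ≤ latticeDist v a b + latticeDist v c e := by
  have hinf : a ⊓ b ⊔ c ⊓ e ≤ (a ⊔ c) ⊓ (b ⊔ e) :=
    sup_le (inf_le_inf le_sup_left le_sup_left) (inf_le_inf le_sup_right le_sup_right)
  calc latticeDist v (a ⊔ c) (b ⊔ e)
      ≤ v (a ⊔ b ⊔ (c ⊔ e)) - v (a ⊓ b ⊔ c ⊓ e) := by
        rw [latticeDist, sup_sup_sup_comm]; linarith [hmono hinf]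
    _ ≤ latticeDist v a b + latticeDist v c e :=
        sup_sub_sup_le_of_le hmono hmod inf_le_sup inf_le_sup

lemma latticeDist_inf_inf_le (a b c e : L) :
    latticeDist v (a ⊓ c) (b ⊓ e) ≤ latticeDist v a b + latticeDist v c e := by
  have hsup : (a ⊓ c) ⊔ (b ⊓ e) ≤ (a ⊔ b) ⊓ (c ⊔ e) :=
    sup_le (inf_le_inf le_sup_left le_sup_left) (inf_le_inf le_sup_right le_sup_right)
  calc latticeDist v (a ⊓ c) (b ⊓ e)
      ≤ v ((a ⊔ b) ⊓ (c ⊔ e)) - v (a ⊓ b ⊓ (c ⊓ e)) := by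
        rw [latticeDist, inf_inf_inf_comm]; linarith [hmono hsup]
    _ ≤ latticeDist v a b + latticeDist v c e :=
        inf_sub_inf_le_of_le hmono hmod inf_le_sup inf_le_sup

end ModularValuation

namespace Submodule

variable {K M : Type*} [DivisionRing K] [AddCommGroup M] [Module K M] [FiniteDimensional K M]

noncomputable def dimDist (A B : Submodule K M) : ℝ :=
  latticeDist (fun A : Submodule K M => (finrank K A : ℝ)) A B

lemma monotone_finrank_real : Monotone fun A : Submodule K M => (finrank K A : ℝ) :=
  fun _ _ h => Nat.cast_le.2 (finrank_mono h)

lemma finrank_real_sup_add_inf (A B : Submodule K M) :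
    (finrank K ↥(A ⊔ B) : ℝ) + finrank K ↥(A ⊓ B) = finrank K A + finrank K B := by
  exact_mod_cast finrank_sup_add_finrank_inf_eq A B

lemma two_mul_finrank_sup_sub_sub_eq_dimDist (A B : Submodule K M) :
    2 * (finrank K ↥(A ⊔ B) : ℝ) - finrank K A - finrank K B = dimDist A B :=
  two_mul_sup_sub_sub_eq_latticeDist (v := fun A : Submodule K M => (finrank K A : ℝ))
    finrank_real_sup_add_inf A B

lemma dimDist_nonneg (A B : Submodule K M) : 0 ≤ dimDist A B :=
  latticeDist_nonneg monotone_finrank_real A B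

lemma dimDist_le_finrank (A B : Submodule K M) : dimDist A B ≤ finrank K M := by
  have hsup : (finrank K ↥(A ⊔ B) : ℝ) ≤ finrank K M := Nat.cast_le.2 (A ⊔ B).finrank_le
  have hinf : (0 : ℝ) ≤ finrank K ↥(A ⊓ B) := Nat.cast_nonneg _
  rw [dimDist, latticeDist]; linarith

lemma dimDist_sup_sup_le (A B C D : Submodule K M) :
    dimDist (A ⊔ C) (B ⊔ D) ≤ dimDist A B + dimDist C D :=
  latticeDist_sup_sup_le monotone_finrank_real finrank_real_sup_add_inf A B C D

lemma dimDist_inf_inf_le (A B C D : Submodule K M) :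
    dimDist (A ⊓ C) (B ⊓ D) ≤ dimDist A B + dimDist C D :=
  latticeDist_inf_inf_le monotone_finrank_real finrank_real_sup_add_inf A B C D

end Submodule

lemma limsup_le_limsup_add_limsup {α : Type*} {f : Filter α} [f.NeBot] {u v w : α → ℝ}
    (h : u ≤ᶠ[f] v + w) (hu : f.IsBoundedUnder (· ≥ ·) u)
    (hv₁ : f.IsBoundedUnder (· ≥ ·) v) (hv₂ : f.IsBoundedUnder (· ≤ ·) v)
    (hw₁ : f.IsBoundedUnder (· ≥ ·) w) (hw₂ : f.IsBoundedUnder (· ≤ ·) w) :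
    limsup u f ≤ limsup v f + limsup w f :=
  (limsup_le_limsup h hu.isCoboundedUnder_le (isBoundedUnder_le_add hv₂ hw₂)).trans
    (limsup_add_le hv₁ hv₂ hw₁.isCoboundedUnder_le hw₂)

section GradedDist

open Submodule

variable {𝕜 : Type*} [Field 𝕜] {V : ℕ → Type*}
  [∀ k, AddCommGroup (V k)] [∀ k, Module 𝕜 (V k)] [∀ k, FiniteDimensional 𝕜 (V k)] {n : ℕ}

lemma gradedDist_eq_limsup_dimDist (W W' : ∀ k, Submodule 𝕜 (V k)) :
    gradedDist n W W' = limsup (fun k : ℕ => dimDist (W k) (W' k) / (k : ℝ) ^ n) atTop := by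
  simp only [gradedDist, two_mul_finrank_sup_sub_sub_eq_dimDist]

variable {C : ℝ} (hC : ∀ k : ℕ, 1 ≤ k → (finrank 𝕜 (V k) : ℝ) ≤ C * (k : ℝ) ^ n)
include hC

lemma eventually_dimDist_div_pow_mem_Icc (W W' : ∀ k, Submodule 𝕜 (V k)) :
    ∀ᶠ k : ℕ in atTop, dimDist (W k) (W' k) / (k : ℝ) ^ n ∈ Set.Icc 0 C := by
  filter_upwards [eventually_ge_atTop 1] with k hk
  have hpow : (0 : ℝ) < (k : ℝ) ^ n := pow_pos (Nat.cast_pos.2 hk) n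
  refine ⟨div_nonneg (dimDist_nonneg _ _) hpow.le, (div_le_iff₀ hpow).2 ?_⟩
  exact (dimDist_le_finrank _ _).trans (hC k hk)

lemma gradedDist_nonneg (W W' : ∀ k, Submodule 𝕜 (V k)) : 0 ≤ gradedDist n W W' := by
  have hmem := eventually_dimDist_div_pow_mem_Icc hC W W'
  rw [gradedDist_eq_limsup_dimDist]
  exact le_limsup_of_frequently_le (hmem.mono fun _ hk => hk.1).frequently
    (isBoundedUnder_of_eventually_le (hmem.mono fun _ hk => hk.2))

lemma gradedDist_le_add_of_dimDist_le {X Y A B A' B' : ∀ k, Submodule 𝕜 (V k)}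
    (h : ∀ k, dimDist (X k) (Y k) ≤ dimDist (A k) (B k) + dimDist (A' k) (B' k)) :
    gradedDist n X Y ≤ gradedDist n A B + gradedDist n A' B' := by
  have bdd_ge (W W' : ∀ k, Submodule 𝕜 (V k)) :
      atTop.IsBoundedUnder (· ≥ ·) fun k : ℕ => dimDist (W k) (W' k) / (k : ℝ) ^ n :=
    isBoundedUnder_of_eventually_ge ((eventually_dimDist_div_pow_mem_Icc hC W W').mono
      fun _ hk => hk.1)
  have bdd_le (W W' : ∀ k, Submodule 𝕜 (V k)) :
      atTop.IsBoundedUnder (· ≤ ·) fun k : ℕ => dimDist (W k) (W' k) / (k : ℝ) ^ n :=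
    isBoundedUnder_of_eventually_le ((eventually_dimDist_div_pow_mem_Icc hC W W').mono
      fun _ hk => hk.2)
  simp only [gradedDist_eq_limsup_dimDist]
  refine limsup_le_limsup_add_limsup (Eventually.of_forall fun k => ?_) (bdd_ge X Y)
    (bdd_ge A B) (bdd_le A B) (bdd_ge A' B') (bdd_le A' B')
  rw [Pi.add_apply, ← add_div]
  exact div_le_div_of_nonneg_right (h k) (pow_nonneg k.cast_nonneg n)

end GradedDist

theorem stmt6_general {𝕜 : Type*} [Field 𝕜] {V : ℕ → Type*}
    [∀ k, AddCommGroup (V k)] [∀ k, Module 𝕜 (V k)] [∀ k, FiniteDimensional 𝕜 (V k)]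
    (n : ℕ)
    (hbdd : ∃ C : ℝ, ∀ k : ℕ, 1 ≤ k → (Module.finrank 𝕜 (V k) : ℝ) ≤ C * (k : ℝ) ^ n)
    (Wseq Vseq : ℕ → ∀ k, Submodule 𝕜 (V k)) (W Vlim : ∀ k, Submodule 𝕜 (V k))
    (hW : Tendsto (fun i => gradedDist n (Wseq i) W) atTop (nhds 0))
    (hV : Tendsto (fun i => gradedDist n (Vseq i) Vlim) atTop (nhds 0)) :
    Tendsto (fun i => gradedDist n (fun k => Wseq i k ⊓ Vseq i k) (fun k => W k ⊓ Vlim k))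
        atTop (nhds 0) ∧
    Tendsto (fun i => gradedDist n (fun k => Wseq i k ⊔ Vseq i k) (fun k => W k ⊔ Vlim k))
        atTop (nhds 0) := by
  obtain ⟨C, hC⟩ := hbdd
  have hsum : Tendsto (fun i => gradedDist n (Wseq i) W + gradedDist n (Vseq i) Vlim)
      atTop (nhds 0) := by simpa using hW.add hV
  exact ⟨squeeze_zero (fun _ => gradedDist_nonneg hC _ _)
      (fun _ => gradedDist_le_add_of_dimDist_le hC fun _ => Submodule.dimDist_inf_inf_le _ _ _ _) hsum,
    squeeze_zero (fun _ => gradedDist_nonneg hC _ _)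
      (fun _ => gradedDist_le_add_of_dimDist_le hC fun _ => Submodule.dimDist_sup_sup_le _ _ _ _) hsum⟩

theorem stmt6 {𝕜 : Type*} [Field 𝕜] {V : ℕ → Type*}
    [∀ k, AddCommGroup (V k)] [∀ k, Module 𝕜 (V k)] [∀ k, FiniteDimensional 𝕜 (V k)]
    (n : ℕ) (hn : 1 ≤ n)
    (hbdd : ∃ C : ℝ, ∀ k : ℕ, 1 ≤ k → (Module.finrank 𝕜 (V k) : ℝ) ≤ C * (k : ℝ) ^ n)
    (Wseq Vseq : ℕ → ∀ k, Submodule 𝕜 (V k)) (W Vlim : ∀ k, Submodule 𝕜 (V k))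
    (hW : Tendsto (fun i => gradedDist n (Wseq i) W) atTop (nhds 0))
    (hV : Tendsto (fun i => gradedDist n (Vseq i) Vlim) atTop (nhds 0)) :
    Tendsto (fun i => gradedDist n (fun k => Wseq i k ⊓ Vseq i k) (fun k => W k ⊓ Vlim k))
        atTop (nhds 0) ∧
    Tendsto (fun i => gradedDist n (fun k => Wseq i k ⊔ Vseq i k) (fun k => W k ⊔ Vlim k))
        atTop (nhds 0) :=
  stmt6_general n hbdd Wseq Vseq W Vlim hW hV
end
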